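/- (Optimal value over co-monotone allocations.) Let Φ₁, …, Φₙ be distortion kernels with associated distortion risk measures ρ₁, …, ρₙ, each satisfying the continuity condition lim_{m→∞} ρᵢ(X ∧ m) = ρᵢ(X) for every nonnegative random variable X with ρᵢ(X) well defined. Let λ₁, …, λₙ > 0 and let X₀ be a random variable with X₀ ≥ 0 a.s. and F_{X₀}(0) = 0. Define Ψ(t) = min{λ₁(1 − Φ₁(t)), …, λₙ(1 − Φₙ(t))} for t ∈ [0, 1]. Then inf{Σᵢ λᵢ ρᵢ(fᵢ(X₀)) : (f₁, …, fₙ) ∈ 𝔸ℂ} = ∫₀^∞ Ψ(F_{X₀}(s)) ds (an equality in [0, +∞]). -/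

import Mathlib

open MeasureTheory Filter
open scoped ENNReal Pointwise Classical

noncomputable section

variable {Ω : Type*} [MeasurableSpace Ω]


/-- `VaR_t(X) = inf {x ∈ ℝ | P(X > x) ≤ 1 − t}`. -/
def VaR (P : Measure Ω) (X : Ω → ℝ) (t : ℝ) : ℝ :=
  sInf {x : ℝ | P {ω | x < X ω} ≤ ENNReal.ofReal (1 - t)}

/-- A distortion kernel: a nondecreasing right-continuous `Φ : [0,1] → [0,1]` with
`Φ(0) = 0` and `Φ(1) = 1`, modelled as a Stieltjes function on `ℝ` extended by `0`
to the left of `0` and by `1` to the right of `1`. -/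
structure DistortionKernel where
  toStieltjes : StieltjesFunction ℝ
  zero_of_nonpos : ∀ x : ℝ, x ≤ 0 → toStieltjes x = 0
  one_of_one_le : ∀ x : ℝ, 1 ≤ x → toStieltjes x = 1

/-- The distortion risk measure `ρ_Φ(X) = ∫₀¹ VaR_t(X) dΦ(t)` (integral against the
Lebesgue–Stieltjes measure of `Φ`). -/
def distortionRisk (P : Measure Ω) (K : DistortionKernel) (X : Ω → ℝ) : ℝ :=
  ∫ t in Set.Ioc (0 : ℝ) 1, VaR P X t ∂K.toStieltjes.measure

/-- The cumulative distribution function `F_X(x) = P(X ≤ x)`. -/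
def cdf (P : Measure Ω) (X : Ω → ℝ) (x : ℝ) : ℝ :=
  (P {ω | X ω ≤ x}).toReal

/-- The distortion risk measure of a nonnegative risk, with values in `[0, +∞]`. -/
def distortionRiskE (P : Measure Ω) (K : DistortionKernel) (X : Ω → ℝ) : ℝ≥0∞ :=
  ∫⁻ t in Set.Ioc (0 : ℝ) 1, ENNReal.ofReal (VaR P X t) ∂K.toStieltjes.measure

/-- The set `𝔸ℂ` of admissible (co-monotone) allocations: tuples of nondecreasing
nonnegative functions on `ℝ₊` vanishing at `0` and summing to the identity. -/
def IsAdmissible (n : ℕ) (f : Fin n → ℝ → ℝ) : Prop :=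
  (∀ i, MonotoneOn (f i) (Set.Ici 0)) ∧ (∀ i x, 0 ≤ x → 0 ≤ f i x) ∧
    (∀ i, f i 0 = 0) ∧ ∀ x : ℝ, 0 ≤ x → ∑ i, f i x = x

/-- The regularity condition `lim_{m→∞} ρ_Φ(X ∧ m) = ρ_Φ(X)` for nonnegative risks. -/
def ContinuityCondition (P : Measure Ω) (K : DistortionKernel) : Prop :=
  ∀ X : Ω → ℝ, Measurable X → (∀ ω, 0 ≤ X ω) →
    Filter.Tendsto (fun m : ℕ => distortionRiskE P K (fun ω => min (X ω) (m : ℝ)))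
      Filter.atTop (nhds (distortionRiskE P K X))


/-!
For a nonnegative risk `X` satisfying the continuity condition, the quantile representation
and Fubini give `ρ_Φ(X) = ∫₀^∞ (1 - Φ(F_X(s))) ds` (first for bounded `X`, then by truncation).
The components of an admissible allocation are nondecreasing and 1-Lipschitz, so each `fᵢ` is a
continuous Stieltjes function; changing variables level by level turns this into
`ρᵢ(fᵢ(X)) = ∫₀^∞ (1 - Φᵢ(F_X(u))) dfᵢ(u)`, and the measures `dfᵢ` add up to Lebesgue measure on
`(0, ∞)`. Bounding each integrand below by `Ψ(F_X)` gives the lower bound; it is attained by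
letting `dfᵢ` be Lebesgue measure on the set where the `i`-th term realises the minimum in `Ψ`
(ties broken by the smallest index).
-/

open Set Topology

section CDF

variable {P : Measure Ω} {X : Ω → ℝ}

lemma cdf_eq_cdf_map [IsProbabilityMeasure P] (hX : Measurable X) :
    cdf P X = ProbabilityTheory.cdf (P.map X) := by
  have := Measure.isProbabilityMeasure_map (μ := P) hX.aemeasurable
  ext x
  rw [ProbabilityTheory.cdf_eq_real, measureReal_def, Measure.map_apply hX measurableSet_Iic]
  rfl

lemma cdf_mono [IsFiniteMeasure P] : Monotone (cdf P X) := fun _ _ hab =>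
  ENNReal.toReal_mono (measure_ne_top _ _) (measure_mono fun _ (h : X _ ≤ _) => h.trans hab)

lemma measurable_cdf [IsFiniteMeasure P] : Measurable (cdf P X) := cdf_mono.measurable

lemma cdf_eq_one_of_forall_le [IsProbabilityMeasure P] {x : ℝ} (h : ∀ ω, X ω ≤ x) :
    cdf P X x = 1 := by
  simp [cdf, h]

lemma cdf_eq_zero_of_neg (hX0 : ∀ᵐ ω ∂P, 0 ≤ X ω) {x : ℝ} (hx : x < 0) : cdf P X x = 0 := by
  have : P {ω | X ω ≤ x} = 0 := measure_mono_null (fun ω (h : X ω ≤ x) => not_le.2 (h.trans_lt hx))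
    (ae_iff.1 hX0)
  simp [cdf, this]

lemma setOf_le_cdf_subset_Ici (hX0 : ∀ᵐ ω ∂P, 0 ≤ X ω) {t : ℝ} (ht : 0 < t) :
    {x | t ≤ cdf P X x} ⊆ Ici 0 := fun _ hx =>
  le_of_not_gt fun hneg => ht.not_ge (hx.trans_eq (cdf_eq_zero_of_neg hX0 hneg))

lemma cdf_le_cdf_comp [IsFiniteMeasure P] {G : ℝ → ℝ} (hG : Monotone G) (x : ℝ) :
    cdf P X x ≤ cdf P (fun ω => G (X ω)) (G x) :=
  ENNReal.toReal_mono (measure_ne_top _ _) (measure_mono fun _ (h : X _ ≤ x) => hG h)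

lemma cdf_comp_le_cdf [IsFiniteMeasure P] {G : ℝ → ℝ} (hG : Monotone G) {s u : ℝ}
    (h : s < G u) : cdf P (fun ω => G (X ω)) s ≤ cdf P X u :=
  ENNReal.toReal_mono (measure_ne_top _ _) (measure_mono fun _ (hω : G (X _) ≤ s) =>
    le_of_not_gt fun hu => (hω.trans_lt h).not_ge (hG hu.le))

lemma cdf_min_of_lt {m s : ℝ} (hs : s < m) : cdf P (fun ω => min (X ω) m) s = cdf P X s := by
  simp [cdf, hs.not_ge]

end CDF

section Quantile

variable {P : Measure Ω} [IsProbabilityMeasure P] {X : Ω → ℝ} {t : ℝ}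

lemma le_cdf_sInf (hX : Measurable X) (hX0 : ∀ᵐ ω ∂P, 0 ≤ X ω) (ht : 0 < t)
    (hne : {x | t ≤ cdf P X x}.Nonempty) : t ≤ cdf P X (sInf {x | t ≤ cdf P X x}) := by
  set q := sInf {x | t ≤ cdf P X x}
  have hbdd : BddBelow {x | t ≤ cdf P X x} := ⟨0, setOf_le_cdf_subset_Ici hX0 ht⟩
  have hright : Tendsto (cdf P X) (𝓝[>] q) (𝓝 (cdf P X q)) := by
    rw [cdf_eq_cdf_map hX]
    exact ((ProbabilityTheory.cdf _).right_continuous q).mono_left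
      (nhdsWithin_mono _ Ioi_subset_Ici_self)
  refine ge_of_tendsto hright (eventually_nhdsWithin_of_forall fun x (hx : q < x) => ?_)
  obtain ⟨y, hy, hyx⟩ := (csInf_lt_iff hbdd hne).1 hx
  exact hy.trans (cdf_mono hyx.le)

lemma le_cdf_iff_sInf_le (hX : Measurable X) (hX0 : ∀ᵐ ω ∂P, 0 ≤ X ω) (ht : 0 < t)
    (hne : {x | t ≤ cdf P X x}.Nonempty) {s : ℝ} :
    t ≤ cdf P X s ↔ sInf {x | t ≤ cdf P X x} ≤ s :=
  ⟨fun h => csInf_le ⟨0, setOf_le_cdf_subset_Ici hX0 ht⟩ h,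
    fun h => (le_cdf_sInf hX hX0 ht hne).trans (cdf_mono h)⟩

lemma cdf_lt_iff_lt_sInf (hX : Measurable X) (hX0 : ∀ᵐ ω ∂P, 0 ≤ X ω) (ht : 0 < t)
    (hne : {x | t ≤ cdf P X x}.Nonempty) {s : ℝ} :
    cdf P X s < t ↔ s < sInf {x | t ≤ cdf P X x} := by
  simpa only [not_le] using (le_cdf_iff_sInf_le hX hX0 ht hne).not

lemma VaR_eq_sInf (hX : Measurable X) (ht : 0 < t) (ht1 : t ≤ 1) :
    VaR P X t = sInf {x | t ≤ cdf P X x} := by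
  refine congrArg sInf (ext fun x => ?_)
  have hcompl : {ω | x < X ω} = {ω | X ω ≤ x}ᶜ := by ext; simp
  rw [mem_ofPred_eq, hcompl, measure_compl (measurableSet_le hX measurable_const)
    (measure_ne_top _ _), measure_univ, ENNReal.ofReal_sub _ ht.le, ENNReal.ofReal_one,
    ENNReal.sub_le_sub_iff_left (by simpa using ht1) ENNReal.one_ne_top,
    ENNReal.ofReal_le_iff_le_toReal (measure_ne_top _ _)]
  rfl

lemma ofReal_VaR_eq_volume (hX : Measurable X) (hX0 : ∀ᵐ ω ∂P, 0 ≤ X ω) {c : ℝ}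
    (hXc : ∀ ω, X ω ≤ c) (ht : 0 < t) (ht1 : t ≤ 1) :
    ENNReal.ofReal (VaR P X t) = volume ({s | cdf P X s < t} ∩ Ioi 0) := by
  have hne : {x | t ≤ cdf P X x}.Nonempty := ⟨c, ht1.trans_eq (cdf_eq_one_of_forall_le hXc).symm⟩
  have hset : {s | cdf P X s < t} ∩ Ioi 0 = Ioo 0 (sInf {x | t ≤ cdf P X x}) := by
    ext s
    simp only [mem_inter_iff, mem_ofPred_eq, cdf_lt_iff_lt_sInf hX hX0 ht hne, mem_Ioi, mem_Ioo,
      and_comm]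
  rw [VaR_eq_sInf hX ht ht1, hset, Real.volume_Ioo, sub_zero]

end Quantile

namespace DistortionKernel

variable (K : DistortionKernel)

lemma measure_Ioi_inter_Ioc (a : ℝ) :
    K.toStieltjes.measure (Ioi a ∩ Ioc 0 1) = ENNReal.ofReal (1 - K.toStieltjes a) := by
  rw [inter_comm, Ioc_inter_Ioi, StieltjesFunction.measure_Ioc, K.one_of_one_le 1 le_rfl]
  rcases le_total a 0 with ha | ha
  · rw [sup_of_le_left ha, K.zero_of_nonpos a ha, K.zero_of_nonpos 0 le_rfl]
  · rw [sup_of_le_right ha]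

lemma lintegral_ofReal_one_sub_comp (μ : Measure ℝ) [SFinite μ] {F : ℝ → ℝ}
    (hF : Measurable F) :
    ∫⁻ s, ENNReal.ofReal (1 - K.toStieltjes (F s)) ∂μ
      = ∫⁻ t in Ioc (0 : ℝ) 1, μ {s | F s < t} ∂K.toStieltjes.measure := by
  set S : Set (ℝ × ℝ) := {p | F p.1 < p.2}
  calc ∫⁻ s, ENNReal.ofReal (1 - K.toStieltjes (F s)) ∂μ
      = ∫⁻ s, ∫⁻ t in Ioc (0 : ℝ) 1, S.indicator 1 (s, t) ∂K.toStieltjes.measure ∂μ := by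
        refine lintegral_congr fun s => ?_
        rw [← K.measure_Ioi_inter_Ioc, ← Measure.restrict_apply' measurableSet_Ioc,
          ← lintegral_indicator_one measurableSet_Ioi]
        rfl
    _ = ∫⁻ t in Ioc (0 : ℝ) 1, ∫⁻ s, S.indicator 1 (s, t) ∂μ ∂K.toStieltjes.measure :=
        lintegral_lintegral_swap (measurable_one.indicator
          (measurableSet_lt (hF.comp measurable_fst) measurable_snd)).aemeasurable
    _ = ∫⁻ t in Ioc (0 : ℝ) 1, μ {s | F s < t} ∂K.toStieltjes.measure := by
        refine lintegral_congr fun t => ?_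
        rw [← lintegral_indicator_one (measurableSet_lt hF measurable_const)]
        rfl

end DistortionKernel

lemma VaR_congr_ae {P : Measure Ω} {Y Z : Ω → ℝ} (h : Y =ᵐ[P] Z) (t : ℝ) :
    VaR P Y t = VaR P Z t := by
  refine congrArg sInf (ext fun x => ?_)
  have hx : {ω | x < Y ω} =ᵐ[P] {ω | x < Z ω} :=
    h.mono fun ω hω => show (x < Y ω) = (x < Z ω) by rw [hω]
  rw [mem_ofPred_eq, mem_ofPred_eq, measure_congr hx]

lemma distortionRiskE_congr_ae {P : Measure Ω} (K : DistortionKernel) {Y Z : Ω → ℝ}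
    (h : Y =ᵐ[P] Z) : distortionRiskE P K Y = distortionRiskE P K Z := by
  simp only [distortionRiskE, VaR_congr_ae h]

section RiskFormula

variable {P : Measure Ω} [IsProbabilityMeasure P] {X : Ω → ℝ} (K : DistortionKernel)

lemma distortionRiskE_eq_of_le (hX : Measurable X) (hX0 : ∀ᵐ ω ∂P, 0 ≤ X ω) {c : ℝ}
    (hXc : ∀ ω, X ω ≤ c) :
    distortionRiskE P K X
      = ∫⁻ s in Ioi 0, ENNReal.ofReal (1 - K.toStieltjes (cdf P X s)) := by
  rw [K.lintegral_ofReal_one_sub_comp _ measurable_cdf]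
  refine setLIntegral_congr_fun measurableSet_Ioc fun t ht => ?_
  rw [ofReal_VaR_eq_volume hX hX0 hXc ht.1 ht.2,
    Measure.restrict_apply (measurableSet_lt measurable_cdf measurable_const)]

/-- For unbounded `X` the set defining `VaR_1(X)` is empty and `sInf ∅ = 0`, so the bounded case
does not apply directly; truncation and the continuity condition bridge the gap. -/
lemma distortionRiskE_eq (hK : ContinuityCondition P K) (hX : Measurable X)
    (hX0 : ∀ ω, 0 ≤ X ω) :
    distortionRiskE P K X
      = ∫⁻ s in Ioi 0, ENNReal.ofReal (1 - K.toStieltjes (cdf P X s)) := by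
  set g : ℝ → ℝ≥0∞ := fun s => ENNReal.ofReal (1 - K.toStieltjes (cdf P X s))
  have htrunc : ∀ m : ℕ,
      distortionRiskE P K (fun ω => min (X ω) m) = ∫⁻ s in Ioo 0 (m : ℝ), g s := by
    intro m
    rw [distortionRiskE_eq_of_le K (hX.min measurable_const)
      (ae_of_all _ fun ω => le_min (hX0 ω) m.cast_nonneg) (fun ω => min_le_right _ _),
      ← Iio_inter_Ioi, ← setLIntegral_indicator measurableSet_Iio]
    refine lintegral_congr fun s => ?_
    by_cases hs : s < (m : ℝ)
    · rw [indicator_of_mem (mem_Iio.2 hs), cdf_min_of_lt hs]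
    · rw [not_lt] at hs
      rw [indicator_of_notMem (notMem_Iio.2 hs),
        cdf_eq_one_of_forall_le fun ω => (min_le_right _ _).trans hs, K.one_of_one_le 1 le_rfl,
        sub_self, ENNReal.ofReal_zero]
  have hmono : Monotone fun m : ℕ => Ioo (0 : ℝ) m := fun a b hab =>
    Ioo_subset_Ioo_right (by exact_mod_cast hab)
  have hlim :
      Tendsto (fun m : ℕ => ∫⁻ s in Ioo 0 (m : ℝ), g s) atTop (𝓝 (∫⁻ s in Ioi 0, g s)) := by
    have hU : (⋃ m : ℕ, Ioo (0 : ℝ) m) = Ioi 0 := by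
      ext s
      simpa using fun _ : 0 < s => exists_nat_gt s
    rw [← hU, setLIntegral_iUnion_of_directed _ hmono.directed_le]
    exact tendsto_atTop_iSup fun a b hab => lintegral_mono_set (hmono hab)
  exact tendsto_nhds_unique ((hK X hX hX0).congr htrunc) hlim

end RiskFormula

section Comp

variable {P : Measure Ω} [IsProbabilityMeasure P] {X : Ω → ℝ} {t : ℝ}

lemma cdf_comp_lt_iff_of_nonempty (hX : Measurable X) (hX0 : ∀ᵐ ω ∂P, 0 ≤ X ω) {G : ℝ → ℝ}
    (hG : Monotone G) (hGc : Continuous G) (ht : 0 < t) (hne : {x | t ≤ cdf P X x}.Nonempty)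
    {s : ℝ} : cdf P (fun ω => G (X ω)) s < t ↔ s < G (sInf {x | t ≤ cdf P X x}) := by
  set q := sInf {x | t ≤ cdf P X x}
  constructor
  · refine fun h => lt_of_not_ge fun hqs => h.not_ge ?_
    calc t ≤ cdf P X q := le_cdf_sInf hX hX0 ht hne
      _ ≤ cdf P (fun ω => G (X ω)) (G q) := cdf_le_cdf_comp hG q
      _ ≤ cdf P (fun ω => G (X ω)) s := cdf_mono hqs
  · intro h
    obtain ⟨u, huq, hsu⟩ := (hGc.continuousAt.eventually (lt_mem_nhds h)).exists_lt
    exact (cdf_comp_le_cdf hG hsu).trans_lt ((cdf_lt_iff_lt_sInf hX hX0 ht hne).2 huq)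

lemma cdf_comp_lt_iff_of_forall_lt {G : ℝ → ℝ} (hG : Monotone G)
    (hlt : ∀ x, cdf P X x < t) (ht1 : t ≤ 1) {s : ℝ} :
    cdf P (fun ω => G (X ω)) s < t ↔ ∃ m : ℕ, s < G m := by
  constructor
  · refine fun h => by_contra fun hs => h.not_ge ?_
    push Not at hs
    refine ht1.trans_eq (cdf_eq_one_of_forall_le fun ω => ?_).symm
    obtain ⟨m, hm⟩ := exists_nat_ge (X ω)
    exact (hG hm).trans (hs m)
  · rintro ⟨m, hm⟩
    exact (cdf_comp_le_cdf hG hm).trans_lt (hlt m)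

/-- Level-wise change of variables `s = G u`. -/
lemma volume_setOf_cdf_comp_lt (hX : Measurable X) (hX0 : ∀ᵐ ω ∂P, 0 ≤ X ω)
    (G : StieltjesFunction ℝ) (hGc : Continuous G) (hG0 : G 0 = 0) (ht : 0 < t) (ht1 : t ≤ 1) :
    volume ({s | cdf P (fun ω => G (X ω)) s < t} ∩ Ioi 0)
      = G.measure ({u | cdf P X u < t} ∩ Ioi 0) := by
  by_cases hne : {x | t ≤ cdf P X x}.Nonempty
  · set q := sInf {x | t ≤ cdf P X x} with hq
    have hGXset : {s | cdf P (fun ω => G (X ω)) s < t} ∩ Ioi 0 = Ioo 0 (G q) := by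
      ext s
      simp only [mem_inter_iff, mem_ofPred_eq, mem_Ioi, mem_Ioo, and_comm, hq,
        cdf_comp_lt_iff_of_nonempty hX hX0 G.mono hGc ht hne]
    have hXset : {u | cdf P X u < t} ∩ Ioi 0 = Ioo 0 q := by
      ext u
      simp only [mem_inter_iff, mem_ofPred_eq, mem_Ioi, mem_Ioo, and_comm, hq,
        cdf_lt_iff_lt_sInf hX hX0 ht hne]
    rw [hGXset, hXset, Real.volume_Ioo, StieltjesFunction.measure_Ioo,
      hGc.continuousWithinAt.leftLim_eq, hG0, sub_zero]
  · have hlt : ∀ x, cdf P X x < t := fun x => lt_of_not_ge fun h => hne ⟨x, h⟩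
    have hGXset : {s | cdf P (fun ω => G (X ω)) s < t} ∩ Ioi 0 = ⋃ m : ℕ, Ioo 0 (G m) := by
      ext s
      simp [cdf_comp_lt_iff_of_forall_lt G.mono hlt ht1, and_comm]
    have hXset : {u | cdf P X u < t} ∩ Ioi 0 = ⋃ m : ℕ, Ioc 0 (m : ℝ) := by
      ext u
      simpa [hlt] using fun _ : 0 < u => exists_nat_ge u
    have hmono : Monotone fun m : ℕ => G m := fun a b hab => G.mono (by exact_mod_cast hab)
    rw [hGXset, hXset, Monotone.measure_iUnion fun a b hab => Ioo_subset_Ioo_right (hmono hab),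
      Monotone.measure_iUnion fun a b hab => Ioc_subset_Ioc_right (by exact_mod_cast hab)]
    simp [StieltjesFunction.measure_Ioc, hG0]

lemma distortionRiskE_comp (K : DistortionKernel) (hK : ContinuityCondition P K)
    (hX : Measurable X) (hX0 : ∀ᵐ ω ∂P, 0 ≤ X ω) (G : StieltjesFunction ℝ) (hGc : Continuous G)
    (hG0 : ∀ x ≤ 0, G x = 0) :
    distortionRiskE P K (fun ω => G (X ω))
      = ∫⁻ u in Ioi 0, ENNReal.ofReal (1 - K.toStieltjes (cdf P X u)) ∂G.measure := by
  have hGnonneg : ∀ x, 0 ≤ G x := fun x =>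
    (le_total x 0).elim (fun hx => (hG0 x hx).ge) fun hx => (hG0 0 le_rfl).ge.trans (G.mono hx)
  have hGX : Measurable fun ω => G (X ω) := G.mono.measurable.comp hX
  rw [distortionRiskE_eq K hK hGX fun ω => hGnonneg _,
    K.lintegral_ofReal_one_sub_comp _ measurable_cdf,
    K.lintegral_ofReal_one_sub_comp _ measurable_cdf]
  refine setLIntegral_congr_fun measurableSet_Ioc fun t ht => ?_
  rw [Measure.restrict_apply (measurableSet_lt measurable_cdf measurable_const),
    Measure.restrict_apply (measurableSet_lt measurable_cdf measurable_const),
    volume_setOf_cdf_comp_lt hX hX0 G hGc (hG0 0 le_rfl) ht.1 ht.2]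

end Comp

section Allocation

lemma MeasureTheory.Measure.restrict_Ioi_ext_of_Ioc {μ ν : Measure ℝ} [IsLocallyFiniteMeasure μ]
    (h : ∀ a b, 0 ≤ a → a ≤ b → μ (Ioc a b) = ν (Ioc a b)) :
    μ.restrict (Ioi 0) = ν.restrict (Ioi 0) := by
  refine Measure.ext_of_Ioc' _ _ (fun a b _ => ?_) fun a b _ => ?_
  · rw [Measure.restrict_apply measurableSet_Ioc]
    exact (measure_mono inter_subset_left).trans_lt measure_Ioc_lt_top |>.ne
  · rw [Measure.restrict_apply measurableSet_Ioc, Measure.restrict_apply measurableSet_Ioc,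
      Ioc_inter_Ioi]
    rcases le_total (a ⊔ 0) b with hab | hab
    · exact h _ _ le_sup_right hab
    · simp [Ioc_eq_empty_of_le hab]

variable {n : ℕ} {f : Fin n → ℝ → ℝ}

lemma IsAdmissible.sub_le_sub (hf : IsAdmissible n f) (i : Fin n) {x y : ℝ} (hx : 0 ≤ x)
    (hxy : x ≤ y) : f i y - f i x ≤ y - x := by
  have hmono : ∀ j, f j x ≤ f j y := fun j => hf.1 j hx (hx.trans hxy) hxy
  calc f i y - f i x ≤ ∑ j, (f j y - f j x) :=
        Finset.single_le_sum (f := fun j => f j y - f j x) (fun j _ => sub_nonneg.2 (hmono j))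
          (Finset.mem_univ i)
    _ = y - x := by rw [Finset.sum_sub_distrib, hf.2.2.2 y (hx.trans hxy), hf.2.2.2 x hx]

lemma IsAdmissible.monotone_comp_max (hf : IsAdmissible n f) (i : Fin n) :
    Monotone fun x => f i (max x 0) := fun _ _ hab =>
  hf.1 i (mem_Ici.2 (le_max_right _ _)) (mem_Ici.2 (le_max_right _ _)) (max_le_max_right 0 hab)

lemma IsAdmissible.lipschitzWith (hf : IsAdmissible n f) (i : Fin n) :
    LipschitzWith 1 fun x => f i (max x 0) := by
  refine LipschitzWith.of_le_add fun x y => ?_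
  rcases le_total x y with hxy | hyx
  · exact (hf.monotone_comp_max i hxy).trans (le_add_of_nonneg_right dist_nonneg)
  · have := hf.sub_le_sub i (le_max_right _ _) (max_le_max_right 0 hyx)
    rw [Real.dist_eq]
    linarith [abs_max_sub_max_le_abs x y 0, le_abs_self (max x 0 - max y 0)]

def IsAdmissible.stieltjes (hf : IsAdmissible n f) (i : Fin n) : StieltjesFunction ℝ where
  toFun x := f i (max x 0)
  mono' := hf.monotone_comp_max i
  right_continuous' _ := (hf.lipschitzWith i).continuous.continuousWithinAt

lemma IsAdmissible.stieltjes_apply (hf : IsAdmissible n f) (i : Fin n) (x : ℝ) :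
    hf.stieltjes i x = f i (max x 0) := rfl

lemma IsAdmissible.sum_measure_restrict_Ioi (hf : IsAdmissible n f) :
    ∑ i, (hf.stieltjes i).measure.restrict (Ioi 0) = volume.restrict (Ioi 0) := by
  simp_rw [← Measure.restrictₗ_apply, ← map_sum]
  refine (Measure.restrict_Ioi_ext_of_Ioc fun a b ha hab => ?_).symm
  simp only [Measure.coe_finsetSum, Finset.sum_apply, StieltjesFunction.measure_Ioc,
    hf.stieltjes_apply, Real.volume_Ioc, max_eq_left ha, max_eq_left (ha.trans hab)]
  rw [← ENNReal.ofReal_sum_of_nonneg fun i _ => sub_nonneg.2 (hf.1 i ha (ha.trans hab) hab),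
    Finset.sum_sub_distrib, hf.2.2.2 b (ha.trans hab), hf.2.2.2 a ha]

end Allocation

lemma IsAdmissible.distortionRiskE_eq_lintegral {P : Measure Ω} [IsProbabilityMeasure P] {n : ℕ}
    {f : Fin n → ℝ → ℝ} (hf : IsAdmissible n f) (i : Fin n) {K : DistortionKernel}
    (hK : ContinuityCondition P K) {X : Ω → ℝ} (hX : Measurable X) (hX0 : ∀ᵐ ω ∂P, 0 ≤ X ω) :
    distortionRiskE P K (fun ω => f i (X ω))
      = ∫⁻ u in Ioi 0, ENNReal.ofReal (1 - K.toStieltjes (cdf P X u))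
          ∂(hf.stieltjes i).measure := by
  have hae : (fun ω => f i (X ω)) =ᵐ[P] fun ω => hf.stieltjes i (X ω) := by
    filter_upwards [hX0] with ω hω
    rw [hf.stieltjes_apply, max_eq_left hω]
  have hG0 : ∀ x ≤ 0, hf.stieltjes i x = 0 := fun x hx => by
    rw [hf.stieltjes_apply, max_eq_right hx, hf.2.2.1]
  rw [distortionRiskE_congr_ae K hae,
    distortionRiskE_comp K hK hX hX0 _ (hf.lipschitzWith i).continuous hG0]

lemma exists_isAdmissible_of_sum_eq_volume {n : ℕ} {ν : Fin n → Measure ℝ}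
    (hν : ∑ i, ν i = volume) :
    ∃ (f : Fin n → ℝ → ℝ) (hf : IsAdmissible n f),
      ∀ i, (hf.stieltjes i).measure.restrict (Ioi 0) = (ν i).restrict (Ioi 0) := by
  have hfin : ∀ i a b, ν i (Ioc a b) ≠ ⊤ := fun i a b => by
    refine ne_top_of_le_ne_top (measure_Ioc_lt_top (μ := volume) (a := a) (b := b)).ne ?_
    rw [← hν, Measure.finsetSum_apply]
    exact Finset.single_le_sum (f := fun j => ν j (Ioc a b)) (fun j _ => zero_le)
      (Finset.mem_univ i)
  set f : Fin n → ℝ → ℝ := fun i x => (ν i (Ioc 0 x)).toReal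
  have hsplit : ∀ i {a b : ℝ}, 0 ≤ a → a ≤ b → f i b = f i a + (ν i (Ioc a b)).toReal := by
    intro i a b ha hab
    simp only [f]
    rw [← Ioc_union_Ioc_eq_Ioc ha hab,
      measure_union (Ioc_disjoint_Ioc_of_le le_rfl) measurableSet_Ioc, ENNReal.toReal_add (hfin i 0 a) (hfin i a b)]
  have hf : IsAdmissible n f := by
    refine ⟨fun i a ha b _ hab => ?_, fun _ _ _ => ENNReal.toReal_nonneg, fun i => by simp [f],
      fun x hx => ?_⟩
    · rw [hsplit i ha hab]
      exact le_add_of_nonneg_right ENNReal.toReal_nonneg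
    · rw [← ENNReal.toReal_sum fun i _ => hfin i 0 x, ← Measure.finsetSum_apply, hν,
        Real.volume_Ioc, sub_zero, ENNReal.toReal_ofReal hx]
  refine ⟨f, hf, fun i => Measure.restrict_Ioi_ext_of_Ioc fun a b ha hab => ?_⟩
  rw [StieltjesFunction.measure_Ioc, hf.stieltjes_apply, hf.stieltjes_apply, max_eq_left ha,
    max_eq_left (ha.trans hab), hsplit i ha hab, add_sub_cancel_left,
    ENNReal.ofReal_toReal (hfin i a b)]

lemma exists_argmin_partition {ι α : Type*} [Fintype ι] [LinearOrder ι]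
    [LocallyFiniteOrderBot ι] [Nonempty ι] [MeasurableSpace α] (μ : Measure α)
    {w : ι → α → ℝ} (hw : ∀ i, Measurable (w i)) :
    ∃ A : ι → Set α, (∀ i, MeasurableSet (A i)) ∧ ∑ i, μ.restrict (A i) = μ ∧
      ∀ i, ∀ x ∈ A i, ∀ j, w i x ≤ w j x := by
  set B : ι → Set α := fun i => {x | ∀ j, w i x ≤ w j x}
  have hB : ∀ i, MeasurableSet (B i) := fun i => by
    simp only [B, ofPred_forall]
    exact .iInter fun j => measurableSet_le (hw i) (hw j)
  have hA : ∀ i, MeasurableSet (disjointed B i) := fun i => by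
    rw [disjointed_eq_inter_compl]
    exact (hB i).inter (.iInter fun j => .iInter fun _ => (hB j).compl)
  have hcover : ⋃ i, B i = univ :=
    eq_univ_of_forall fun x => mem_iUnion.2 (Finite.exists_min (w · x))
  refine ⟨disjointed B, hA, ?_, fun i x hx => disjointed_subset B i hx⟩
  rw [← Measure.sum_fintype, ← Measure.restrict_iUnion (disjoint_disjointed B) hA,
    iUnion_disjointed, hcover, Measure.restrict_univ]

theorem stmt17_general (P : Measure Ω) [IsProbabilityMeasure P]
    (n : ℕ) (hn : 0 < n) (K : Fin n → DistortionKernel)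
    (hcont : ∀ i, ContinuityCondition P (K i))
    (X₀ : Ω → ℝ) (hmeas : Measurable X₀) (hpos : ∀ᵐ ω ∂P, 0 ≤ X₀ ω)
    (lam : Fin n → ℝ) (hlam : ∀ i, 0 < lam i) :
    ⨅ (f : Fin n → ℝ → ℝ) (_ : IsAdmissible n f),
        ∑ i, ENNReal.ofReal (lam i) * distortionRiskE P (K i) (fun ω => f i (X₀ ω)) =
      ∫⁻ s in Set.Ioi (0 : ℝ),
        ENNReal.ofReal (⨅ i, lam i * (1 - (K i).toStieltjes (cdf P X₀ s))) := by
  set w : Fin n → ℝ → ℝ := fun i s => lam i * (1 - (K i).toStieltjes (cdf P X₀ s))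
  have hval : ∀ f (hf : IsAdmissible n f),
      ∑ i, ENNReal.ofReal (lam i) * distortionRiskE P (K i) (fun ω => f i (X₀ ω))
        = ∑ i, ∫⁻ s, ENNReal.ofReal (w i s) ∂(hf.stieltjes i).measure.restrict (Ioi 0) := by
    refine fun f hf => Finset.sum_congr rfl fun i _ => ?_
    rw [hf.distortionRiskE_eq_lintegral i (hcont i) hmeas hpos,
      ← lintegral_const_mul' _ _ ENNReal.ofReal_ne_top]
    simp_rw [← ENNReal.ofReal_mul (hlam i).le, w]
  have hsplit : ∀ f (hf : IsAdmissible n f), ∫⁻ s in Ioi 0, ENNReal.ofReal (⨅ i, w i s)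
      = ∑ i, ∫⁻ s, ENNReal.ofReal (⨅ j, w j s) ∂(hf.stieltjes i).measure.restrict (Ioi 0) :=
    fun f hf => by rw [← lintegral_finsetSum_measure, hf.sum_measure_restrict_Ioi]
  apply le_antisymm
  · have : Nonempty (Fin n) := ⟨⟨0, hn⟩⟩
    have hw : ∀ i, Measurable (w i) := fun i => measurable_const.mul
      (measurable_const.sub ((K i).toStieltjes.mono.measurable.comp measurable_cdf))
    obtain ⟨A, hA, hAsum, hAmin⟩ := exists_argmin_partition volume hw
    obtain ⟨f, hf, hfA⟩ := exists_isAdmissible_of_sum_eq_volume hAsum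
    refine iInf₂_le_of_le f hf (le_of_eq ?_)
    rw [hval f hf, hsplit f hf]
    refine Finset.sum_congr rfl fun i _ => lintegral_congr_ae ?_
    rw [hfA i]
    filter_upwards [ae_restrict_of_ae (ae_restrict_mem (hA i))] with s hs
    rw [le_antisymm (le_ciInf (hAmin i s hs)) (ciInf_le (Finite.bddBelow_range _) i)]
  · refine le_iInf₂ fun f hf => ?_
    rw [hval f hf, hsplit f hf]
    gcongr with i s
    exact ciInf_le (Finite.bddBelow_range _) i

theorem stmt17 (P : Measure Ω) [IsProbabilityMeasure P]
    (n : ℕ) (hn : 0 < n) (K : Fin n → DistortionKernel)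
    (hcont : ∀ i, ContinuityCondition P (K i))
    (X₀ : Ω → ℝ) (hmeas : Measurable X₀) (hpos : ∀ᵐ ω ∂P, 0 ≤ X₀ ω)
    (hF0 : cdf P X₀ 0 = 0)
    (lam : Fin n → ℝ) (hlam : ∀ i, 0 < lam i) :
    ⨅ (f : Fin n → ℝ → ℝ) (_ : IsAdmissible n f),
        ∑ i, ENNReal.ofReal (lam i) * distortionRiskE P (K i) (fun ω => f i (X₀ ω)) =
      ∫⁻ s in Set.Ioi (0 : ℝ),
        ENNReal.ofReal (⨅ i, lam i * (1 - (K i).toStieltjes (cdf P X₀ s))) :=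
  stmt17_general P n hn K hcont X₀ hmeas hpos lam hlam

end
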